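/- Let l, k ≥ 0, δ, e, α, b ∈ ℝ^l, ζ ∈ ℝ^k, c, c₀ ∈ ℝ, and suppose there exists (x,z) ∈ ℝ^l × ℝ^k with Σᵢ(½αᵢxᵢ² + bᵢxᵢ) + Σⱼ zⱼ + c < 0. If the problem (P₂): minimize Σᵢ(δᵢyᵢ + eᵢxᵢ) + Σⱼ ζⱼzⱼ + c₀ over x, y ∈ ℝ^l, z ∈ ℝ^k subject to Σᵢ(αᵢyᵢ + bᵢxᵢ) + Σⱼ zⱼ + c ≤ 0 and ½xᵢ² ≤ yᵢ for all i, is unbounded from below, then the problem (P₃): minimize Σᵢ(½δᵢxᵢ² + eᵢxᵢ) + Σⱼ ζⱼzⱼ + c₀ over x ∈ ℝ^l, z ∈ ℝ^k subject to Σᵢ(½αᵢxᵢ² + bᵢxᵢ) + Σⱼ zⱼ + c ≤ 0, is also unbounded from below. -/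

import Mathlib

open scoped Classical

/-- The objective `f(x,u,w) = Σᵢ(½δᵢxᵢ² + eᵢxᵢ) + Σⱼ(ζⱼuⱼwⱼ + ½wⱼ² + ηⱼwⱼ)` of problem (P₁). -/
noncomputable def quadObj {l k : ℕ} (δ e : Fin l → ℝ) (ζ η : Fin k → ℝ)
    (x : Fin l → ℝ) (u w : Fin k → ℝ) : ℝ :=
  (∑ i, ((1/2) * δ i * x i ^ 2 + e i * x i)) +
    ∑ j, (ζ j * u j * w j + (1/2) * w j ^ 2 + η j * w j)

/-- The constraint function `h(x,u,w) = Σᵢ(½αᵢxᵢ² + bᵢxᵢ) + Σⱼ uⱼwⱼ + c` of problem (P₁). -/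
noncomputable def quadCon {l k : ℕ} (α b : Fin l → ℝ) (c : ℝ)
    (x : Fin l → ℝ) (u w : Fin k → ℝ) : ℝ :=
  (∑ i, ((1/2) * α i * x i ^ 2 + b i * x i)) + (∑ j, u j * w j) + c

/-- The SOCP objective `Σᵢ(δᵢyᵢ + eᵢxᵢ) + Σⱼ ζⱼzⱼ + c₀` of problem (P₂). -/
noncomputable def socpObj {l k : ℕ} (δ e : Fin l → ℝ) (ζ : Fin k → ℝ) (c₀ : ℝ)
    (x y : Fin l → ℝ) (z : Fin k → ℝ) : ℝ :=
  (∑ i, (δ i * y i + e i * x i)) + (∑ j, ζ j * z j) + c₀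

/-- The linear part `Σᵢ(αᵢyᵢ + bᵢxᵢ) + Σⱼ zⱼ` of the SOCP constraint in (P₂). -/
noncomputable def socpConLhs {l k : ℕ} (α b : Fin l → ℝ)
    (x y : Fin l → ℝ) (z : Fin k → ℝ) : ℝ :=
  (∑ i, (α i * y i + b i * x i)) + ∑ j, z j

/-!
A multiplier `μ ≥ 0` for which every Lagrangian piece `½(δᵢ + μαᵢ)t² + (eᵢ + μbᵢ)t` and
`(ζⱼ + μ)t` is bounded below bounds (P₂) from below (weak duality, using `½xᵢ² ≤ yᵢ`). So it is
enough to produce such a multiplier whenever (P₃) is bounded below on its nonempty feasible set: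
an S-lemma for separable quadratics, in which the variables `z` are pieces with vanishing
quadratic coefficient.

For each coordinate the admissible multipliers form an interval, so by Helly's theorem on the
line it suffices to treat two coordinates at a time. If a single coordinate admits no multiplier,
moving it alone along a ray lowers both the objective and the constraint. If two coordinates
admit no common multiplier, there is a `μ` at which the Lagrangian piece of one of them decreases
without bound along a ray, while the other, whose piece stays `≤ 0`, can be moved so as to keep
the constraint value fixed; then the objective of (P₃) is unbounded below.
-/

open Filter Set

lemma Finset.exists_subset_pair_of_card_le_two {α : Type*} [DecidableEq α] [Nonempty α]
    {I : Finset α} (hI : I.card ≤ 2) : ∃ p r, I ⊆ {p, r} := by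
  rcases I.eq_empty_or_nonempty with rfl | ⟨p, hp⟩
  · obtain ⟨p⟩ := ‹Nonempty α›
    exact ⟨p, p, Finset.empty_subset _⟩
  obtain ⟨r, hr⟩ := Finset.card_le_one_iff_subset_singleton.1
    (show (I.erase p).card ≤ 1 by rw [Finset.card_erase_of_mem hp]; omega)
  refine ⟨p, r, fun i hi => ?_⟩
  rcases eq_or_ne i p with rfl | h
  · simp
  · exact Finset.mem_insert_of_mem (hr (Finset.mem_erase.2 ⟨h, hi⟩))

namespace SeparableQP

noncomputable def quad (a b t : ℝ) : ℝ := 1 / 2 * a * t ^ 2 + b * t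

lemma quad_add_mul (δ e α b μ t : ℝ) :
    quad (δ + μ * α) (e + μ * b) t = quad δ e t + μ * quad α b t := by
  unfold quad; ring

lemma quad_mul_right (a b τ s : ℝ) : quad a b (τ * s) = quad (a * τ ^ 2) (b * τ) s := by
  unfold quad; ring

lemma mul_quad (k a b t : ℝ) : k * quad a b t = quad (k * a) (k * b) t := by
  unfold quad; ring

lemma continuous_quad (a b : ℝ) : Continuous (quad a b) := by
  unfold quad; fun_prop

lemma tendsto_quad_atTop {a : ℝ} (b : ℝ) (ha : 0 < a) : Tendsto (quad a b) atTop atTop := by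
  have h : quad a b = fun t => t * (a / 2 * t + b) := by funext t; unfold quad; ring
  rw [h]
  exact tendsto_id.atTop_mul_atTop₀ <|
    tendsto_atTop_add_const_right _ b (tendsto_id.const_mul_atTop (by positivity))

lemma tendsto_quad_atBot {a b : ℝ} (h : a < 0 ∨ a = 0 ∧ b < 0) :
    Tendsto (quad a b) atTop atBot := by
  rcases h with ha | ⟨rfl, hb⟩
  · have h : quad a b = fun t => -quad (-a) (-b) t := by funext t; unfold quad; ring
    rw [h]
    exact tendsto_neg_atTop_atBot.comp (tendsto_quad_atTop _ (neg_pos.2 ha))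
  · have h : quad 0 b = fun t => b * t := by funext t; unfold quad; ring
    rw [h]
    exact tendsto_id.const_mul_atTop_of_neg hb

lemma exists_ray_tendsto_quad_atBot {a b : ℝ} (h : ¬(0 < a ∨ a = 0 ∧ b = 0)) :
    ∃ τ ≠ 0, Tendsto (fun s => quad a b (τ * s)) atTop atBot := by
  push Not at h
  obtain ⟨ha, hb⟩ := h
  rcases ha.lt_or_eq with ha | rfl
  · exact ⟨1, one_ne_zero, by simpa using tendsto_quad_atBot (Or.inl ha)⟩
  · refine ⟨-b, neg_ne_zero.2 (hb rfl), ?_⟩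
    simp_rw [quad_mul_right]
    exact tendsto_quad_atBot (Or.inr ⟨by ring, by nlinarith [sq_pos_of_ne_zero (hb rfl)]⟩)

lemma bddBelow_range_quad_iff {a b : ℝ} :
    BddBelow (range (quad a b)) ↔ 0 < a ∨ a = 0 ∧ b = 0 := by
  refine ⟨fun hbdd => ?_, ?_⟩
  · by_contra h
    obtain ⟨τ, -, hτ⟩ := exists_ray_tendsto_quad_atBot h
    exact not_bddBelow_of_tendsto_atBot hτ (hbdd.mono (by rintro _ ⟨s, rfl⟩; exact ⟨_, rfl⟩))
  · rintro (ha | ⟨rfl, rfl⟩)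
    · refine ⟨-b ^ 2 / (2 * a), ?_⟩
      rintro _ ⟨t, rfl⟩
      rw [div_le_iff₀ (by positivity)]
      unfold quad
      nlinarith [sq_nonneg (a * t + b)]
    · exact ⟨0, by rintro _ ⟨t, rfl⟩; simp [quad]⟩

lemma nonneg_of_bddBelow_range_quad {a b : ℝ} (h : BddBelow (range (quad a b))) : 0 ≤ a := by
  rcases bddBelow_range_quad_iff.1 h with ha | ha
  exacts [ha.le, ha.1.ge]

lemma exists_ray_of_not_bddBelow {a b : ℝ} (h : ¬BddBelow (range (quad a b))) :
    ∃ τ ≠ 0, Tendsto (fun s => quad a b (τ * s)) atTop atBot :=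
  exists_ray_tendsto_quad_atBot (bddBelow_range_quad_iff.not.1 h)

lemma exists_quad_eq_of_mul_nonneg {a T : ℝ} (b ε : ℝ) (ha : a ≠ 0) (hT : 0 ≤ a * T) :
    ∃ w, quad a b w = T ∧ ε * w ≤ 0 := by
  obtain ⟨τ, hτ, hετ⟩ : ∃ τ : ℝ, τ ≠ 0 ∧ ε * τ ≤ 0 := by
    rcases le_total 0 ε with h | h
    exacts [⟨-1, by norm_num, by linarith⟩, ⟨1, one_ne_zero, by linarith⟩]
  have hcont : ContinuousOn (fun s => quad a b (τ * s)) (Ici 0) :=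
    ((continuous_quad a b).comp (continuous_const.mul continuous_id)).continuousOn
  have hray : (fun s => quad a b (τ * s)) = quad (a * τ ^ 2) (b * τ) := by
    funext s; exact quad_mul_right a b τ s
  suffices ∃ s ≥ 0, quad a b (τ * s) = T from
    let ⟨s, hs, hsT⟩ := this
    ⟨τ * s, hsT, by rw [← mul_assoc]; exact mul_nonpos_of_nonpos_of_nonneg hετ hs⟩
  rcases lt_or_gt_of_ne ha with ha | ha
  · have hlim := tendsto_quad_atBot (a := a * τ ^ 2) (b := b * τ) (Or.inl (by nlinarith [sq_pos_of_ne_zero hτ]))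
    exact intermediate_value_Ici' hcont (hray ▸ hlim)
      (by simpa [quad] using nonpos_of_mul_nonneg_right hT ha)
  · exact intermediate_value_Ici hcont (hray ▸ tendsto_quad_atTop _ (by positivity))
      (by simpa [quad] using nonneg_of_mul_nonneg_right hT ha)

def boundedMultipliers (δ e α b : ℝ) : Set ℝ :=
  {μ | 0 ≤ μ ∧ BddBelow (range (quad (δ + μ * α) (e + μ * b)))}

lemma mem_boundedMultipliers_iff {δ e α b μ : ℝ} :
    μ ∈ boundedMultipliers δ e α b ↔
      0 ≤ μ ∧ (0 < δ + μ * α ∨ δ + μ * α = 0 ∧ e + μ * b = 0) :=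
  and_congr_right fun _ => bddBelow_range_quad_iff

lemma convex_boundedMultipliers (δ e α b : ℝ) : Convex ℝ (boundedMultipliers δ e α b) := by
  rintro μ₁ ⟨h₁, m₁, hm₁⟩ μ₂ ⟨h₂, m₂, hm₂⟩ s t hs ht hst
  refine ⟨by positivity, s * m₁ + t * m₂, ?_⟩
  rintro _ ⟨x, rfl⟩
  have hsplit : quad (δ + (s • μ₁ + t • μ₂) * α) (e + (s • μ₁ + t • μ₂) * b) x
      = s * quad (δ + μ₁ * α) (e + μ₁ * b) x + t * quad (δ + μ₂ * α) (e + μ₂ * b) x := by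
    simp only [quad, smul_eq_mul]
    linear_combination (1 / 2 * δ * x ^ 2 + e * x) * hst.symm
  rw [hsplit]
  gcongr
  exacts [hm₁ ⟨x, rfl⟩, hm₂ ⟨x, rfl⟩]

lemma mem_boundedMultipliers_of_le {δ e α b μ μ' : ℝ} (hα : 0 < α)
    (h : μ ∈ boundedMultipliers δ e α b) (hle : μ ≤ μ') : μ' ∈ boundedMultipliers δ e α b := by
  rcases hle.eq_or_lt with rfl | hlt
  · exact h
  have hD := nonneg_of_bddBelow_range_quad h.2
  exact mem_boundedMultipliers_iff.2 ⟨h.1.trans hlt.le, Or.inl (by nlinarith)⟩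

lemma mem_boundedMultipliers_of_ge {δ e α b μ μ' : ℝ} (hα : α < 0)
    (h : μ ∈ boundedMultipliers δ e α b) (hle : μ' ≤ μ) (h0 : 0 ≤ μ') :
    μ' ∈ boundedMultipliers δ e α b := by
  rcases hle.eq_or_lt with rfl | hlt
  · exact h
  have hD := nonneg_of_bddBelow_range_quad h.2
  exact mem_boundedMultipliers_iff.2 ⟨h0, Or.inl (by nlinarith)⟩

section Separable

variable {ι : Type*} [Fintype ι]

noncomputable def sepQuad (a b x : ι → ℝ) : ℝ := ∑ i, quad (a i) (b i) (x i)

lemma sepQuad_update [DecidableEq ι] (a b x : ι → ℝ) (p : ι) (v : ℝ) :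
    sepQuad a b (Function.update x p v) =
      sepQuad a b x - quad (a p) (b p) (x p) + quad (a p) (b p) v := by
  unfold sepQuad
  simp_rw [Function.apply_update (fun i => quad (a i) (b i)) x p v]
  rw [Finset.sum_update_of_mem (Finset.mem_univ p), ← Finset.add_sum_erase _ _ (Finset.mem_univ p),
    Finset.sdiff_singleton_eq_erase]
  ring

lemma sepQuad_zero (b x : ι → ℝ) : sepQuad 0 b x = ∑ i, b i * x i := by
  simp [sepQuad, quad]

lemma sepQuad_sum_elim {κ : Type*} [Fintype κ] (a b x : ι → ℝ) (a' b' x' : κ → ℝ) :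
    sepQuad (Sum.elim a a') (Sum.elim b b') (Sum.elim x x') = sepQuad a b x + sepQuad a' b' x' :=
  Fintype.sum_sum_type _

variable [DecidableEq ι] {δ e α b : ι → ℝ} {c : ℝ} {x₀ : ι → ℝ}

lemma not_bddBelow_of_lone_move (hx₀ : sepQuad α b x₀ + c ≤ 0) {p : ι} {τ : ℝ}
    (hq : Tendsto (fun s => quad (δ p) (e p) (τ * s)) atTop atBot)
    (hg : ∀ᶠ s in atTop, quad (α p) (b p) (τ * s) ≤ quad (α p) (b p) (x₀ p)) :
    ¬BddBelow (sepQuad δ e '' {x | sepQuad α b x + c ≤ 0}) := by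
  refine not_bddBelow_iff.2 fun M => ?_
  obtain ⟨s, hsM, hs⟩ := ((hq.eventually_lt_atBot
    (M - sepQuad δ e x₀ + quad (δ p) (e p) (x₀ p))).and hg).exists
  refine ⟨_, ⟨Function.update x₀ p (τ * s), ?_, rfl⟩, ?_⟩
  · simp only [mem_ofPred_eq, sepQuad_update]
    linarith
  · rw [sepQuad_update]
    linarith

lemma not_bddBelow_of_pair_move (hx₀ : sepQuad α b x₀ + c ≤ 0) {p r : ι} (hpr : p ≠ r) (μ : ℝ)
    (h : ∀ M, ∃ v w, quad (δ p + μ * α p) (e p + μ * b p) v < M ∧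
      quad (α p) (b p) v + quad (α r) (b r) w = quad (α p) (b p) (x₀ p) + quad (α r) (b r) (x₀ r) ∧
      quad (δ r + μ * α r) (e r + μ * b r) w ≤ 0) :
    ¬BddBelow (sepQuad δ e '' {x | sepQuad α b x + c ≤ 0}) := by
  refine not_bddBelow_iff.2 fun M => ?_
  obtain ⟨v, w, hv, hvw, hw⟩ := h (M - sepQuad δ e x₀ + quad (δ p) (e p) (x₀ p) +
    quad (δ r) (e r) (x₀ r) + μ * (quad (α p) (b p) (x₀ p) + quad (α r) (b r) (x₀ r)))
  have hμ := congrArg (μ * ·) hvw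
  simp only [mul_add] at hμ
  rw [quad_add_mul] at hv hw
  refine ⟨_, ⟨Function.update (Function.update x₀ p v) r w, ?_, rfl⟩, ?_⟩
  · simp only [mem_ofPred_eq, sepQuad_update, Function.update_of_ne hpr.symm]
    linarith
  · simp only [sepQuad_update, Function.update_of_ne hpr.symm]
    linarith

lemma not_bddBelow_of_linear_absorber (hx₀ : sepQuad α b x₀ + c ≤ 0) {p r : ι} (hpr : p ≠ r)
    {μ : ℝ} (hp : ¬BddBelow (range (quad (δ p + μ * α p) (e p + μ * b p))))
    (hαr : α r = 0) (hδr : δ r = 0) (hbr : b r ≠ 0) (her : e r + μ * b r = 0) :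
    ¬BddBelow (sepQuad δ e '' {x | sepQuad α b x + c ≤ 0}) := by
  refine not_bddBelow_of_pair_move hx₀ hpr μ fun M => ?_
  obtain ⟨_, ⟨v, rfl⟩, hv⟩ := not_bddBelow_iff.1 hp M
  refine ⟨v, (quad (α p) (b p) (x₀ p) + quad (α r) (b r) (x₀ r) - quad (α p) (b p) v) / b r,
    hv, ?_, ?_⟩
  · simp only [quad, hαr]
    field_simp
    ring
  · simp [quad, hαr, hδr, her]

lemma not_bddBelow_of_quadratic_absorber (hx₀ : sepQuad α b x₀ + c ≤ 0) {p r : ι} (hpr : p ≠ r)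
    {μ : ℝ} (hp : ¬BddBelow (range (quad (δ p + μ * α p) (e p + μ * b p))))
    (hα : α p * α r < 0) (hDr : δ r + μ * α r ≤ 0) :
    ¬BddBelow (sepQuad δ e '' {x | sepQuad α b x + c ≤ 0}) := by
  obtain ⟨τ, hτ, hray⟩ := exists_ray_of_not_bddBelow hp
  set C := quad (α p) (b p) (x₀ p) + quad (α r) (b r) (x₀ r)
  -- along the ray the constraint piece of `p` tends to infinity with the sign of `α p`, so the
  -- value that `r` has to take over eventually has the sign of `α r`
  have hsign : ∀ᶠ s in atTop, 0 ≤ α r * (C - quad (α p) (b p) (τ * s)) := by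
    have : Tendsto (fun s => α r * quad (α p) (b p) (τ * s)) atTop atBot := by
      simp_rw [mul_quad, quad_mul_right]
      exact tendsto_quad_atBot (Or.inl (by nlinarith [sq_pos_of_ne_zero hτ]))
    filter_upwards [this.eventually_le_atBot (α r * C)] with s hs
    linarith [mul_sub (α r) C (quad (α p) (b p) (τ * s))]
  refine not_bddBelow_of_pair_move hx₀ hpr μ fun M => ?_
  obtain ⟨s, hsM, hs⟩ := ((hray.eventually_lt_atBot M).and hsign).exists
  obtain ⟨w, hw, hεw⟩ :=
    exists_quad_eq_of_mul_nonneg (b r) (e r + μ * b r) (right_ne_zero_of_mul hα.ne) hs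
  refine ⟨τ * s, w, hsM, by rw [hw]; ring, ?_⟩
  unfold quad
  nlinarith [sq_nonneg w]

lemma boundedMultipliers_nonempty (hx₀ : sepQuad α b x₀ + c ≤ 0)
    (hbdd : BddBelow (sepQuad δ e '' {x | sepQuad α b x + c ≤ 0})) (p : ι) :
    (boundedMultipliers (δ p) (e p) (α p) (b p)).Nonempty := by
  by_contra hempty
  have hnot : ∀ μ, 0 ≤ μ → ¬(0 < δ p + μ * α p ∨ δ p + μ * α p = 0 ∧ e p + μ * b p = 0) :=
    fun μ hμ h => hempty ⟨μ, mem_boundedMultipliers_iff.2 ⟨hμ, h⟩⟩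
  have h0 := hnot 0 le_rfl
  simp only [zero_mul, add_zero] at h0
  rcases lt_trichotomy (α p) 0 with hα | hα | hα
  · obtain ⟨τ, hτ, hq⟩ := exists_ray_tendsto_quad_atBot h0
    refine not_bddBelow_of_lone_move hx₀ hq ?_ hbdd
    simp_rw [quad_mul_right]
    exact (tendsto_quad_atBot (Or.inl (by nlinarith [sq_pos_of_ne_zero hτ]))).eventually_le_atBot _
  · by_cases hb : b p = 0
    · obtain ⟨τ, -, hq⟩ := exists_ray_tendsto_quad_atBot h0
      exact not_bddBelow_of_lone_move hx₀ hq (.of_forall fun s => by simp [quad, hα, hb]) hbdd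
    -- move along `-b p`, which lowers the constraint; the objective falls along it because
    -- otherwise `-e p / b p` would be a bounded multiplier
    have hdesc : δ p < 0 ∨ δ p = 0 ∧ 0 < e p * b p := by
      rcases (not_lt.1 fun h => h0 (Or.inl h)).lt_or_eq with hδ | hδ
      · exact Or.inl hδ
      refine Or.inr ⟨hδ, lt_of_not_ge fun heb => hnot (-e p / b p) ?_
        (Or.inr ⟨by simp [hα, hδ], by field_simp; ring⟩)⟩
      rw [show -e p / b p = -(e p * b p) / b p ^ 2 by field_simp]
      exact div_nonneg (by linarith) (sq_nonneg _)
    refine not_bddBelow_of_lone_move hx₀ (p := p) (τ := -b p) ?_ ?_ hbdd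
    · simp_rw [quad_mul_right]
      refine tendsto_quad_atBot ?_
      rcases hdesc with hδ | ⟨hδ, heb⟩
      · exact Or.inl (by nlinarith [sq_pos_of_ne_zero hb])
      · exact Or.inr ⟨by simp [hδ], by linarith⟩
    · simp_rw [quad_mul_right, hα]
      have hlim := tendsto_quad_atBot (a := 0 * (-b p) ^ 2) (b := b p * -b p)
        (Or.inr ⟨by ring, by nlinarith [sq_pos_of_ne_zero hb]⟩)
      exact hlim.eventually_le_atBot _
  · refine hempty ⟨max 0 (-δ p / α p) + 1, mem_boundedMultipliers_iff.2 ⟨by positivity, Or.inl ?_⟩⟩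
    have := le_max_right 0 (-δ p / α p)
    rw [div_le_iff₀ hα] at this
    nlinarith

lemma boundedMultipliers_inter_nonempty_of_alpha_eq_zero (hx₀ : sepQuad α b x₀ + c ≤ 0)
    (hbdd : BddBelow (sepQuad δ e '' {x | sepQuad α b x + c ≤ 0})) {p r : ι} (hpr : p ≠ r)
    (hαp : α p = 0) {μ₁ μ₂ : ℝ} (h₁ : μ₁ ∈ boundedMultipliers (δ p) (e p) (α p) (b p))
    (h₂ : μ₂ ∈ boundedMultipliers (δ r) (e r) (α r) (b r)) :
    (boundedMultipliers (δ p) (e p) (α p) (b p) ∩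
      boundedMultipliers (δ r) (e r) (α r) (b r)).Nonempty := by
  obtain ⟨hμ₁, hD₁⟩ := mem_boundedMultipliers_iff.1 h₁
  simp only [hαp, mul_zero, add_zero] at hD₁
  by_cases hlin : δ p = 0 ∧ b p ≠ 0
  · refine ⟨μ₁, h₁, hμ₁, ?_⟩
    by_contra hr
    have he : e p + μ₁ * b p = 0 := by
      rcases hD₁ with h | h
      exacts [absurd hlin.1 h.ne', h.2]
    exact not_bddBelow_of_linear_absorber hx₀ hpr.symm hr hαp hlin.1 hlin.2 he hbdd
  · -- every `μ ≥ 0` is a bounded multiplier of `p`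
    refine ⟨μ₂, mem_boundedMultipliers_iff.2 ⟨h₂.1, ?_⟩, h₂⟩
    simp only [hαp, mul_zero, add_zero]
    rcases hD₁ with h | ⟨hδ, he⟩
    · exact Or.inl h
    · have hb : b p = 0 := not_not.1 fun hb => hlin ⟨hδ, hb⟩
      simp_all

lemma boundedMultipliers_inter_nonempty_of_alpha_neg_of_pos (hx₀ : sepQuad α b x₀ + c ≤ 0)
    (hbdd : BddBelow (sepQuad δ e '' {x | sepQuad α b x + c ≤ 0})) {p r : ι} (hpr : p ≠ r)
    (hαp : α p < 0) (hαr : 0 < α r) {μ₁ : ℝ}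
    (h₁ : μ₁ ∈ boundedMultipliers (δ p) (e p) (α p) (b p)) :
    (boundedMultipliers (δ p) (e p) (α p) (b p) ∩
      boundedMultipliers (δ r) (e r) (α r) (b r)).Nonempty := by
  obtain ⟨m, hDp⟩ : ∃ m, ∀ μ, δ p + μ * α p = (μ - m) * α p :=
    ⟨δ p / -α p, fun μ => by field_simp [hαp.ne]; ring⟩
  obtain ⟨ν, hDr⟩ : ∃ ν, ∀ μ, δ r + μ * α r = (μ - ν) * α r :=
    ⟨δ r / -α r, fun μ => by field_simp [hαr.ne']; ring⟩
  have hμ₁ := h₁.1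
  have hμ₁m : μ₁ ≤ m := by
    have := nonneg_of_bddBelow_range_quad h₁.2
    rw [hDp] at this
    nlinarith
  rcases lt_or_ge ν m with hνm | hmν
  · -- both quadratic coefficients are positive on `(ν, m)`
    refine ⟨max μ₁ ((ν + m) / 2), ?_, mem_boundedMultipliers_iff.2
      ⟨le_max_of_le_left hμ₁, Or.inl ?_⟩⟩
    · rcases max_choice μ₁ ((ν + m) / 2) with h | h
      · rwa [h]
      · rw [h, mem_boundedMultipliers_iff, hDp]
        exact ⟨h ▸ le_max_of_le_left hμ₁, Or.inl (mul_pos_of_neg_of_neg (by linarith) hαp)⟩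
    · rw [hDr]
      exact mul_pos (by linarith [le_max_right μ₁ ((ν + m) / 2)]) hαr
  · -- at `m` both quadratic coefficients are `≤ 0`, so whichever piece is unbounded is absorbed
    -- by the other
    by_contra hdisj
    have hm : 0 ≤ m := hμ₁.trans hμ₁m
    by_cases hp : BddBelow (range (quad (δ p + m * α p) (e p + m * b p)))
    · exact not_bddBelow_of_quadratic_absorber hx₀ hpr.symm
        (fun hr => hdisj ⟨m, ⟨hm, hp⟩, ⟨hm, hr⟩⟩) (by nlinarith) (by rw [hDp]; simp) hbdd
    · exact not_bddBelow_of_quadratic_absorber hx₀ hpr hp (by nlinarith)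
        (by rw [hDr]; nlinarith) hbdd

lemma boundedMultipliers_inter_nonempty (hx₀ : sepQuad α b x₀ + c ≤ 0)
    (hbdd : BddBelow (sepQuad δ e '' {x | sepQuad α b x + c ≤ 0})) (p r : ι) :
    (boundedMultipliers (δ p) (e p) (α p) (b p) ∩
      boundedMultipliers (δ r) (e r) (α r) (b r)).Nonempty := by
  obtain ⟨μ₁, h₁⟩ := boundedMultipliers_nonempty hx₀ hbdd p
  obtain ⟨μ₂, h₂⟩ := boundedMultipliers_nonempty hx₀ hbdd r
  rcases eq_or_ne p r with rfl | hpr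
  · exact ⟨μ₁, h₁, h₁⟩
  wlog hα : α p ≤ α r generalizing p r μ₁ μ₂
  · rw [inter_comm]
    exact this r p μ₂ h₂ μ₁ h₁ hpr.symm (le_of_not_ge hα)
  rcases lt_trichotomy (α p) 0 with hp | hp | hp
  · rcases lt_trichotomy (α r) 0 with hr | hr | hr
    · exact ⟨min μ₁ μ₂, mem_boundedMultipliers_of_ge hp h₁ (min_le_left _ _) (le_min h₁.1 h₂.1),
        mem_boundedMultipliers_of_ge hr h₂ (min_le_right _ _) (le_min h₁.1 h₂.1)⟩
    · rw [inter_comm]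
      exact boundedMultipliers_inter_nonempty_of_alpha_eq_zero hx₀ hbdd hpr.symm hr h₂ h₁
    · exact boundedMultipliers_inter_nonempty_of_alpha_neg_of_pos hx₀ hbdd hpr hp hr h₁
  · exact boundedMultipliers_inter_nonempty_of_alpha_eq_zero hx₀ hbdd hpr hp h₁ h₂
  · exact ⟨max μ₁ μ₂, mem_boundedMultipliers_of_le hp h₁ (le_max_left _ _),
      mem_boundedMultipliers_of_le (hp.trans_le hα) h₂ (le_max_right _ _)⟩

theorem exists_multiplier_of_bddBelow (hx₀ : sepQuad α b x₀ + c ≤ 0)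
    (hbdd : BddBelow (sepQuad δ e '' {x | sepQuad α b x + c ≤ 0})) :
    ∃ μ, 0 ≤ μ ∧ ∀ i, BddBelow (range (quad (δ i + μ * α i) (e i + μ * b i))) := by
  rcases isEmpty_or_nonempty ι with hι | hι
  · exact ⟨0, le_rfl, isEmptyElim⟩
  obtain ⟨i₀⟩ := id hι
  have hpairs : ∀ I : Finset ι, I.card ≤ Module.finrank ℝ ℝ + 1 →
      (⋂ i ∈ I, boundedMultipliers (δ i) (e i) (α i) (b i)).Nonempty := by
    intro I hI
    rw [Module.finrank_self] at hI
    obtain ⟨p, r, hpr⟩ := Finset.exists_subset_pair_of_card_le_two hI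
    obtain ⟨μ, hp, hr⟩ := boundedMultipliers_inter_nonempty hx₀ hbdd p r
    refine ⟨μ, mem_iInter₂.2 fun i hi => ?_⟩
    rcases Finset.mem_insert.1 (hpr hi) with rfl | hi
    · exact hp
    · rw [Finset.mem_singleton.1 hi]
      exact hr
  obtain ⟨μ, hμ⟩ := Convex.helly_theorem' (s := Finset.univ)
    (fun i _ => convex_boundedMultipliers (δ i) (e i) (α i) (b i)) fun I _ => hpairs I
  simp only [Finset.mem_univ, iInter_true, mem_iInter] at hμ
  exact ⟨μ, (hμ i₀).1, fun i => (hμ i).2⟩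

end Separable

lemma exists_forall_le_socpObj {l k : ℕ} (δ e α b : Fin l → ℝ) (ζ : Fin k → ℝ) (c c₀ : ℝ) {μ : ℝ}
    (hμ : 0 ≤ μ) (hx : ∀ i, BddBelow (range (quad (δ i + μ * α i) (e i + μ * b i))))
    (hz : ∀ j, ζ j + μ = 0) :
    ∃ M, ∀ x y z, socpConLhs α b x y z + c ≤ 0 → (∀ i, 1 / 2 * x i ^ 2 ≤ y i) →
      M ≤ socpObj δ e ζ c₀ x y z := by
  choose m hm using hx
  refine ⟨∑ i, m i + μ * c + c₀, fun x y z hcon hxy => ?_⟩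
  have hterm : ∀ i, m i ≤ (δ i + μ * α i) * y i + (e i + μ * b i) * x i := fun i => by
    have hD := nonneg_of_bddBelow_range_quad ⟨m i, hm i⟩
    calc m i ≤ quad (δ i + μ * α i) (e i + μ * b i) (x i) := hm i ⟨x i, rfl⟩
      _ ≤ _ := by unfold quad; nlinarith [mul_le_mul_of_nonneg_left (hxy i) hD]
  have hsplit : ∑ i, ((δ i + μ * α i) * y i + (e i + μ * b i) * x i) =
      ∑ i, (δ i * y i + e i * x i) + μ * ∑ i, (α i * y i + b i * x i) := by
    rw [Finset.mul_sum, ← Finset.sum_add_distrib]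
    exact Finset.sum_congr rfl fun i _ => by ring
  have hzsum : ∑ j, ζ j * z j = -μ * ∑ j, z j := by
    rw [Finset.mul_sum]
    exact Finset.sum_congr rfl fun j _ => by linear_combination z j * hz j
  have hcon' := mul_le_mul_of_nonneg_left hcon hμ
  unfold socpObj
  unfold socpConLhs at hcon'
  linarith [Finset.sum_le_sum fun i (_ : i ∈ Finset.univ) => hterm i]

end SeparableQP

open SeparableQP

theorem stmt_10 (l k : ℕ) (δ e α b : Fin l → ℝ) (ζ : Fin k → ℝ) (c c₀ : ℝ)
    (hslater : ∃ (x : Fin l → ℝ) (z : Fin k → ℝ),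
      (∑ i, ((1/2) * α i * x i ^ 2 + b i * x i)) + (∑ j, z j) + c < 0)
    (hunb : ∀ M : ℝ, ∃ (x y : Fin l → ℝ) (z : Fin k → ℝ),
      socpConLhs α b x y z + c ≤ 0 ∧ (∀ i, (1/2) * x i ^ 2 ≤ y i) ∧
      socpObj δ e ζ c₀ x y z < M) :
    ∀ M : ℝ, ∃ (x : Fin l → ℝ) (z : Fin k → ℝ),
      (∑ i, ((1/2) * α i * x i ^ 2 + b i * x i)) + (∑ j, z j) + c ≤ 0 ∧
      (∑ i, ((1/2) * δ i * x i ^ 2 + e i * x i)) + (∑ j, ζ j * z j) + c₀ < M := by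
  obtain ⟨x₀, z₀, hx₀⟩ := hslater
  by_contra! hbdd
  obtain ⟨M, hM⟩ := hbdd
  -- the `z`-coordinates become separable pieces with quadratic coefficients `0`
  have hfeas : sepQuad (Sum.elim α 0) (Sum.elim b 1) (Sum.elim x₀ z₀) + c ≤ 0 := by
    simp only [sepQuad_sum_elim, sepQuad_zero, Pi.one_apply, one_mul]
    exact hx₀.le
  have hbdd : BddBelow (sepQuad (Sum.elim δ 0) (Sum.elim e ζ) ''
      {x | sepQuad (Sum.elim α 0) (Sum.elim b 1) x + c ≤ 0}) := by
    refine ⟨M - c₀, ?_⟩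
    rintro _ ⟨x, hx, rfl⟩
    rw [← Sum.elim_comp_inl_inr x] at hx ⊢
    simp only [mem_ofPred_eq, sepQuad_sum_elim, sepQuad_zero, Pi.one_apply, one_mul] at hx ⊢
    have hMx : M ≤ sepQuad δ e (x ∘ Sum.inl) + _ + c₀ := hM _ _ hx
    linarith
  obtain ⟨μ, hμ, hcert⟩ := exists_multiplier_of_bddBelow hfeas hbdd
  obtain ⟨N, hN⟩ := exists_forall_le_socpObj δ e α b ζ c c₀ hμ (fun i => hcert (.inl i))
    fun j => by simpa [bddBelow_range_quad_iff] using hcert (.inr j)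
  obtain ⟨x, y, z, hcon, hxy, hobj⟩ := hunb N
  exact hobj.not_ge (hN x y z hcon hxy)
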